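/- Let G be a finite connected simple graph with at least two vertices and an edge-weight function w : E(G) → ℝ that is injective on the edge set, and let T be the (unique) minimum spanning tree of G. Then T is a minimum bottleneck spanning tree: the maximum edge weight of T is less than or equal to the maximum edge weight of every spanning tree of G. -/

import Mathlib

open SimpleGraph

/-- `T` is a spanning tree of `G`: a spanning subgraph (same vertex set, edges of `G`)
that is a tree (connected and acyclic). -/
def IsSpanningTree {V : Type*} (G T : SimpleGraph V) : Prop :=
  T ≤ G ∧ T.IsTree

/-- Total edge weight of a graph (sum of `w` over its edge set). -/
noncomputable def totalWeight {V : Type*} [Fintype V] (w : Sym2 V → ℝ)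
    (T : SimpleGraph V) : ℝ :=
  ∑ e ∈ T.edgeSet.toFinite.toFinset, w e

/-- Maximum edge weight of a graph (as `WithBot ℝ`, `⊥` if there are no edges). -/
noncomputable def maxWeight {V : Type*} [Fintype V] (w : Sym2 V → ℝ)
    (T : SimpleGraph V) : WithBot ℝ :=
  (T.edgeSet.toFinite.toFinset.image w).max

/-!
The cut property of minimum spanning trees: if `T` minimises total weight and `e = uv` is an
edge of `T`, then every edge of `G` joining the two components of `T - e` weighs at least `w e`,
since exchanging it for `e` yields another spanning tree. Any spanning tree `T'` contains such an
edge, on its path from `u` to `v`, so every edge of `T` weighs at most the heaviest edge of `T'`.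
-/

namespace SimpleGraph

variable {V : Type*}

lemma Reachable.deleteEdges_left_or_right {G : SimpleGraph V} {u v x : V} (h : G.Reachable x u) :
    (G.deleteEdges {s(u, v)}).Reachable x u ∨ (G.deleteEdges {s(u, v)}).Reachable x v := by
  rw [reachable_iff_reflTransGen] at h
  induction h using Relation.ReflTransGen.head_induction_on with
  | refl => exact .inl .rfl
  | @head x y hxy _ ih =>
    by_cases he : s(x, y) = s(u, v)
    · rcases Sym2.eq_iff.mp he with ⟨rfl, -⟩ | ⟨rfl, -⟩
      · exact .inl .rfl
      · exact .inr .rfl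
    · have hxy' : (G.deleteEdges {s(u, v)}).Adj x y := by simp [hxy, he]
      exact ih.imp hxy'.reachable.trans hxy'.reachable.trans

lemma IsTree.deleteEdges_sup_edge {T : SimpleGraph V} (hT : T.IsTree) {u v a b : V}
    (ha : (T.deleteEdges {s(u, v)}).Reachable u a)
    (hb : ¬(T.deleteEdges {s(u, v)}).Reachable u b) :
    (T.deleteEdges {s(u, v)} ⊔ edge a b).IsTree := by
  set H := T.deleteEdges {s(u, v)}
  have hab : ¬H.Reachable a b := fun h ↦ hb (ha.trans h)
  have hbv : H.Reachable b v :=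
    (hT.connected b u).deleteEdges_left_or_right.resolve_left fun h ↦ hb h.symm
  have hab_adj : (H ⊔ edge a b).Adj a b :=
    Or.inr <| (edge_adj ..).mpr ⟨.inl ⟨rfl, rfl⟩, fun h ↦ hab (h ▸ .rfl)⟩
  have huv : (H ⊔ edge a b).Reachable u v :=
    ((ha.mono le_sup_left).trans hab_adj.reachable).trans (hbv.mono le_sup_left)
  refine ⟨(connected_iff_exists_forall_reachable _).mpr ⟨u, fun x ↦ ?_⟩,
    (hT.isAcyclic.anti (deleteEdges_le _)).sup_edge_of_not_reachable hab⟩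
  rcases (hT.connected x u).deleteEdges_left_or_right (v := v) with hxu | hxv
  · exact (hxu.mono le_sup_left).symm
  · exact huv.trans (hxv.mono le_sup_left).symm

end SimpleGraph

section Weights

variable {V : Type*} [Fintype V] (w : Sym2 V → ℝ)

lemma totalWeight_deleteEdges_singleton {T : SimpleGraph V} {e : Sym2 V} (he : e ∈ T.edgeSet) :
    totalWeight w (T.deleteEdges {e}) = totalWeight w T - w e := by
  classical
  have : (T.deleteEdges {e}).edgeSet.toFinite.toFinset = T.edgeSet.toFinite.toFinset.erase e := by
    ext; simp [and_comm]
  rw [totalWeight, totalWeight, this, Finset.sum_erase_eq_sub (by simpa using he)]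

lemma totalWeight_sup_edge {H : SimpleGraph V} {a b : V} (hne : a ≠ b) (hab : ¬H.Adj a b) :
    totalWeight w (H ⊔ edge a b) = totalWeight w H + w s(a, b) := by
  classical
  have : (H ⊔ edge a b).edgeSet.toFinite.toFinset =
      insert s(a, b) H.edgeSet.toFinite.toFinset := by
    ext; simp [edgeSet_edge_of_ne hne]
  rw [totalWeight, totalWeight, this, Finset.sum_insert (by simpa using hab), add_comm]

lemma le_maxWeight {T : SimpleGraph V} {e : Sym2 V} (he : e ∈ T.edgeSet) :
    (w e : WithBot ℝ) ≤ maxWeight w T :=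
  Finset.le_max (Finset.mem_image_of_mem w (by simpa using he))

lemma maxWeight_le {T : SimpleGraph V} {M : WithBot ℝ}
    (h : ∀ e ∈ T.edgeSet, (w e : WithBot ℝ) ≤ M) :
    maxWeight w T ≤ M :=
  Finset.max_le fun _ hx ↦ by
    obtain ⟨e, he, rfl⟩ := Finset.mem_image.mp hx
    exact h e (by simpa using he)

end Weights

section CutProperty

variable {V : Type*} [Fintype V] {w : Sym2 V → ℝ} {G T : SimpleGraph V}

lemma IsSpanningTree.weight_le_of_crossing (hT : IsSpanningTree G T)
    (hmin : ∀ T', IsSpanningTree G T' → totalWeight w T ≤ totalWeight w T') {u v a b : V}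
    (huv : T.Adj u v) (hab : G.Adj a b) (ha : (T.deleteEdges {s(u, v)}).Reachable u a)
    (hb : ¬(T.deleteEdges {s(u, v)}).Reachable u b) :
    w s(u, v) ≤ w s(a, b) := by
  set H := T.deleteEdges {s(u, v)}
  have hH_ab : ¬H.Adj a b := fun h ↦ hb (ha.trans h.reachable)
  have hexchange : IsSpanningTree G (H ⊔ edge a b) :=
    ⟨sup_le ((deleteEdges_le _).trans hT.1) ((edge_le_iff _).mpr (.inr hab)),
      hT.2.deleteEdges_sup_edge ha hb⟩
  have hle := hmin _ hexchange
  rw [totalWeight_sup_edge w hab.ne hH_ab, totalWeight_deleteEdges_singleton w huv] at hle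
  linarith

lemma IsSpanningTree.weight_le_maxWeight (hT : IsSpanningTree G T)
    (hmin : ∀ T', IsSpanningTree G T' → totalWeight w T ≤ totalWeight w T')
    {T' : SimpleGraph V} (hT'G : T' ≤ G) (hT' : T'.Preconnected) {u v : V} (huv : T.Adj u v) :
    (w s(u, v) : WithBot ℝ) ≤ maxWeight w T' := by
  have hbridge : ¬(T.deleteEdges {s(u, v)}).Reachable u v :=
    isAcyclic_iff_forall_adj_isBridge.mp hT.2.isAcyclic huv
  obtain ⟨d, -, ha, hb⟩ := (hT' u v).some.exists_boundary_dart
    {x | (T.deleteEdges {s(u, v)}).Reachable u x} .rfl hbridge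
  calc (w s(u, v) : WithBot ℝ) ≤ w d.edge :=
        WithBot.coe_le_coe.mpr (hT.weight_le_of_crossing hmin huv (hT'G d.adj) ha hb)
    _ ≤ maxWeight w T' := le_maxWeight w d.edge_mem

end CutProperty

theorem mst_is_minimum_bottleneck_general {V : Type*} [Fintype V]
    (G : SimpleGraph V)
    (w : Sym2 V → ℝ)
    (T : SimpleGraph V) (hT : IsSpanningTree G T)
    (hmin : ∀ T', IsSpanningTree G T' → totalWeight w T ≤ totalWeight w T')
    (T' : SimpleGraph V) (hT' : IsSpanningTree G T') :
    maxWeight w T ≤ maxWeight w T' := by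
  refine maxWeight_le w fun e he ↦ ?_
  induction e using Sym2.ind with
  | h u v => exact hT.weight_le_maxWeight hmin hT'.1 hT'.2.connected.preconnected he

/-- In a finite connected graph on at least two vertices with distinct edge
weights, the (unique) minimum spanning tree is a minimum bottleneck spanning
tree: its maximum edge weight is at most the maximum edge weight of every
spanning tree. -/
theorem mst_is_minimum_bottleneck {V : Type*} [Fintype V]
    (hcard : 2 ≤ Fintype.card V)
    (G : SimpleGraph V) (hG : G.Connected)
    (w : Sym2 V → ℝ) (hw : Set.InjOn w G.edgeSet)
    (T : SimpleGraph V) (hT : IsSpanningTree G T)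
    (hmin : ∀ T', IsSpanningTree G T' → totalWeight w T ≤ totalWeight w T')
    (T' : SimpleGraph V) (hT' : IsSpanningTree G T') :
    maxWeight w T ≤ maxWeight w T' :=
  mst_is_minimum_bottleneck_general G w T hT hmin T' hT'
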